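/- arXiv:math/0404073 — 3 statements merged into one kernel-verified Lean document; each statement's English description precedes it below -/
import Mathlib

section
/- Let n > 2 be an odd integer. For any integers k', σ with 0 < k' < n/2 and 0 < σ < n/4, there exists i ∈ ℕ, i < n/2, such that the least positive residue k of i·k' modulo n satisfies σ < k < n/2. -/
/-- For odd n and positive integers k', σ with k' < n/2 and σ < n/4, there is
i < n/2 such that the least positive residue k of i·k' modulo n satisfies
σ < k < n/2. -/
theorem exists_multiple_in_range (n k' σ : ℕ)
    (hodd : Odd n) (hσ : 0 < σ) (hσn : 4 * σ < n)
    (hk' : 0 < k') (hk'n : 2 * k' < n) :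
    ∃ i k : ℕ, 2 * i < n ∧ k = (i * k') % n ∧ σ < k ∧ 2 * k < n := by
  rcases lt_or_ge σ k' with h | h
  · exact ⟨1, k', by omega, by rw [one_mul, Nat.mod_eq_of_lt (by omega)], h, hk'n⟩
  · refine ⟨σ / k' + 1, (σ / k' + 1) * k', ?_, ?_, ?_, ?_⟩
    · have := Nat.div_le_self σ k'
      omega
    · have h1 : σ / k' * k' ≤ σ := Nat.div_mul_le_self σ k'
      rw [Nat.mod_eq_of_lt (by rw [add_mul, one_mul]; omega)]
    · have h1 := Nat.div_add_mod σ k'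
      have h2 := Nat.mod_lt σ hk'
      have h3 : σ / k' * k' = k' * (σ / k') := Nat.mul_comm _ _
      rw [add_mul, one_mul]; omega
    · have h1 : σ / k' * k' ≤ σ := Nat.div_mul_le_self σ k'
      rw [add_mul, one_mul]; omega
end

section
/- Let G be a group with finite generating set X such that for every finite nonempty A ⊆ G there exists x ∈ X with #(xA Δ A) ≥ c·#A for a fixed c > 0. Then γ_G^X(n) ≥ (1 + c/2)^n for all n ≥ 0; in particular G has exponential growth with ω(G,X) ≥ 1 + c/2. -/
/-- Word length of g with respect to X ∪ X⁻¹: the least length of a word in the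
generators and their inverses representing g. -/
noncomputable def wlen {G : Type*} [Group G] (X : Set G) (g : G) : ℕ :=
  sInf {n | ∃ l : List G, l.length = n ∧ (∀ x ∈ l, x ∈ X ∨ x⁻¹ ∈ X) ∧ l.prod = g}

/-- The growth function γ_G^X(n) = #{g ∈ G : |g|_X ≤ n}. -/
noncomputable def growth {G : Type*} [Group G] (X : Finset G) (n : ℕ) : ℕ :=
  Nat.card {g : G // wlen (X : Set G) g ≤ n}

/-- The exponential growth rate ω(G,X) = inf_n γ_G^X(n)^{1/n}
(which equals the limit of γ_G^X(n)^{1/n} by submultiplicativity). -/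
noncomputable def growthRate {G : Type*} [Group G] (X : Finset G) : ℝ :=
  ⨅ n : ℕ, (growth X (n + 1) : ℝ) ^ ((1 : ℝ) / (n + 1))

open scoped symmDiff

/-!
Let `B n` be the ball of radius `n`. The isoperimetric hypothesis applied to `B n` gives a
generator `x` with `c * #(B n) ≤ #(x • B n ∆ B n)`, and `x • B n ∪ B n ⊆ B (n + 1)`. Since
`x • B n` and `B n` have the same size, `#(x • B n ∆ B n) = 2 * (#(x • B n ∪ B n) - #(B n))`,
so `#(B (n + 1)) ≥ (1 + c / 2) * #(B n)`; induction from `B 0 = {1}` gives the bound on the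
growth function, and taking `(n + 1)`-st roots the bound on the growth rate.
-/

open Finset in
theorem Finset.card_symmDiff_add_two_mul_card_of_card_eq {α : Type*} [DecidableEq α]
    {s t : Finset α} (h : #s = #t) : #(s ∆ t) + 2 * #t = 2 * #(s ∪ t) := by
  rw [symmDiff_def, sup_eq_union, card_union_of_disjoint disjoint_sdiff_sdiff,
    card_sdiff_comm h.symm, ← card_sdiff_add_card]
  ring

section WordLength

variable {G : Type*} [Group G] {X : Set G}

theorem wlen_le_length {l : List G} (hl : ∀ x ∈ l, x ∈ X ∨ x⁻¹ ∈ X) :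
    wlen X l.prod ≤ l.length :=
  Nat.sInf_le ⟨l, rfl, hl, rfl⟩

theorem exists_word_length_eq_wlen {g : G} (hg : g ∈ Subgroup.closure X) :
    ∃ l : List G, l.length = wlen X g ∧ (∀ x ∈ l, x ∈ X ∨ x⁻¹ ∈ X) ∧ l.prod = g := by
  rw [← Subgroup.mem_toSubmonoid, Subgroup.closure_toSubmonoid] at hg
  obtain ⟨l, hl, rfl⟩ := Submonoid.exists_list_of_mem_closure hg
  have hne : {n | ∃ w : List G, w.length = n ∧ (∀ x ∈ w, x ∈ X ∨ x⁻¹ ∈ X) ∧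
      w.prod = l.prod}.Nonempty := ⟨_, l, rfl, hl, rfl⟩
  exact Nat.sInf_mem hne

theorem wlen_one : wlen X 1 = 0 :=
  Nat.le_zero.mp (wlen_le_length (l := []) (by simp))

theorem wlen_mul_le {x g : G} (hx : x ∈ X) (hg : g ∈ Subgroup.closure X) :
    wlen X (x * g) ≤ wlen X g + 1 := by
  obtain ⟨l, hlen, hl, rfl⟩ := exists_word_length_eq_wlen hg
  rw [← hlen, ← List.prod_cons]
  exact wlen_le_length (List.forall_mem_cons.mpr ⟨Or.inl hx, hl⟩)

-- Off the subgroup generated by `X`, `wlen X` is the junk value `sInf ∅ = 0`.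
theorem finite_setOf_wlen_le (hX : X.Finite) (hgen : Subgroup.closure X = ⊤) (n : ℕ) :
    {g | wlen X g ≤ n}.Finite := by
  have : Finite ↥(X ∪ X⁻¹) := (hX.union hX.inv).to_subtype
  refine ((List.finite_length_le ↥(X ∪ X⁻¹) n).image fun l => (l.map (↑)).prod).subset ?_
  intro g hg
  obtain ⟨l, hlen, hl, rfl⟩ := exists_word_length_eq_wlen (hgen ▸ Subgroup.mem_top g)
  lift l to List ↥(X ∪ X⁻¹) using hl
  rw [Set.mem_ofPred_eq, ← hlen, List.length_map] at hg
  exact ⟨l, hg, rfl⟩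

end WordLength

theorem le_growthRate_of_pow_le_growth {G : Type*} [Group G] {X : Finset G} {r : ℝ}
    (hr : 0 ≤ r) (h : ∀ n, r ^ n ≤ growth X n) : r ≤ growthRate X := by
  refine le_ciInf fun n => ?_
  calc r = (r ^ (n + 1)) ^ ((n + 1 : ℕ) : ℝ)⁻¹ :=
        (Real.pow_rpow_inv_natCast hr n.succ_ne_zero).symm
    _ ≤ _ := by
      rw [one_div]; push_cast
      gcongr
      exact_mod_cast h (n + 1)

open Finset in
theorem pow_le_card_of_isoperimetric {G : Type*} [Group G] [DecidableEq G] {X : Finset G}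
    {c : ℝ} (hc : 0 ≤ c)
    (hiso : ∀ A : Finset G, A.Nonempty → ∃ x ∈ X,
      c * #A ≤ #((A.image (fun a => x * a)) ∆ A))
    {B : ℕ → Finset G} (hB : (B 0).Nonempty) (hmono : ∀ n, B n ⊆ B (n + 1))
    (hmul : ∀ n, ∀ x ∈ X, ∀ g ∈ B n, x * g ∈ B (n + 1)) (n : ℕ) :
    (1 + c / 2) ^ n ≤ #(B n) := by
  induction n with
  | zero => simpa using hB.card_pos
  | succ n ih =>
    obtain ⟨x, hx, hxA⟩ := hiso (B n) (hB.mono (monotone_nat_of_le_succ hmono n.zero_le))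
    set T := (B n).image (fun a => x * a)
    have hT : #T = #(B n) := card_image_of_injective _ (mul_right_injective x)
    have hsub : T ∪ B n ⊆ B (n + 1) :=
      union_subset (image_subset_iff.mpr fun g hg => hmul n x hx g hg) (hmono n)
    have hcount : (#(T ∆ B n) + 2 * #(B n) : ℝ) ≤ 2 * #(B (n + 1)) := by
      exact_mod_cast (card_symmDiff_add_two_mul_card_of_card_eq hT).trans_le
        (Nat.mul_le_mul_left 2 (card_le_card hsub))
    calc (1 + c / 2) ^ (n + 1) = (1 + c / 2) * (1 + c / 2) ^ n := pow_succ' _ _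
      _ ≤ (1 + c / 2) * #(B n) := by gcongr
      _ ≤ #(B (n + 1)) := by linarith

/-- If every finite nonempty A ⊆ G has #(xA Δ A) ≥ c·#A for some x ∈ X, then
γ_G^X(n) ≥ (1 + c/2)^n; in particular ω(G,X) ≥ 1 + c/2. -/
theorem growth_of_isoperimetric {G : Type*} [Group G] [DecidableEq G]
    (X : Finset G) (hX : Subgroup.closure (X : Set G) = ⊤)
    (c : ℝ) (hc : 0 < c)
    (hiso : ∀ A : Finset G, A.Nonempty → ∃ x ∈ X,
      c * A.card ≤ ((A.image (fun a => x * a)) ∆ A).card) :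
    (∀ n : ℕ, (1 + c / 2) ^ n ≤ (growth X n : ℝ)) ∧
    1 + c / 2 ≤ growthRate X := by
  have hfin := finite_setOf_wlen_le X.finite_toSet hX
  have hgrowth : ∀ n, growth X n = (hfin n).toFinset.card := fun n =>
    (Nat.card_coe_set_eq _).trans (Set.ncard_eq_toFinset_card _ (hfin n))
  have hball : ∀ n, (1 + c / 2) ^ n ≤ (growth X n : ℝ) := by
    simp_rw [hgrowth]
    refine pow_le_card_of_isoperimetric hc.le hiso ⟨1, by simp [wlen_one]⟩
      (fun n g => by simpa using Nat.le_succ_of_le) (fun n x hx g hg => ?_)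
    simp only [Set.Finite.mem_toFinset, Set.mem_ofPred_eq] at hg ⊢
    exact (wlen_mul_le hx (hX ▸ Subgroup.mem_top g)).trans (Nat.succ_le_succ hg)
  exact ⟨hball, le_growthRate_of_pow_le_growth (by positivity) hball⟩
end

section
/- Let F be the free group on two generators u, v, acting on ℓ²(F) by the left regular representation. Then α(F, {u,v}) > 0; in fact for every unit vector f ∈ ℓ²(F), max{‖u·f − f‖, ‖v·f − f‖} ≥ some explicit positive constant (e.g. one may take the constant (2 − √3)^{1/2} or any positive lower bound). -/
/-!
Split `F₂ ∖ {1}` into the four cones `A_l` of reduced words beginning with the letter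
`l ∈ {u, u⁻¹, v, v⁻¹}`. Left multiplication by `l⁻¹` maps `A_l` bijectively onto the complement
of `A_{l⁻¹}`; restricting `‖l · f - f‖` to `A_l` and using the reverse triangle inequality in
`ℓ²(A_l)` gives `‖l · f - f‖ ≥ √(1 - ‖f|A_{l⁻¹}‖²) - √(‖f|A_l‖²)`. Since the four cones are
disjoint, the cones of `u` and `u⁻¹`, or those of `v` and `v⁻¹`, carry mass at most `1/2`, and
then one of the two letters of that generator carries mass at most `1/4`, which yields
`‖x · f - f‖ ≥ √(1/2) - √(1/4)` for that generator `x`.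
-/

/-- Displacement of f by x in the left regular representation:
‖x·f − f‖ where (x·f)(g) = f(x⁻¹g). -/
noncomputable def disp {G : Type*} [Group G] (x : G) (f : G → ℝ) : ℝ :=
  Real.sqrt (∑' g, (f (x⁻¹ * g) - f g) ^ 2)

open Function
open scoped lp

lemma lp_two_norm_eq_sqrt_tsum {ι : Type*} (c : ℓ²(ι, ℝ)) : ‖c‖ = √(∑' i, c i ^ 2) := by
  rw [← Real.sqrt_sq (norm_nonneg c), ← real_inner_self_eq_norm_sq, lp.inner_eq_tsum]
  simp [sq]

lemma memℓp_two_of_summable_sq {ι : Type*} {a : ι → ℝ} (ha : Summable fun i => a i ^ 2) :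
    Memℓp a 2 :=
  memℓp_gen (by simpa using ha)

lemma sqrt_tsum_sq_sub_le {ι : Type*} {a b : ι → ℝ} (ha : Summable fun i => a i ^ 2)
    (hb : Summable fun i => b i ^ 2) :
    √(∑' i, a i ^ 2) - √(∑' i, b i ^ 2) ≤ √(∑' i, (a i - b i) ^ 2) := by
  let A : ℓ²(ι, ℝ) := ⟨a, memℓp_two_of_summable_sq ha⟩
  let B : ℓ²(ι, ℝ) := ⟨b, memℓp_two_of_summable_sq hb⟩
  simpa only [lp_two_norm_eq_sqrt_tsum, lp.coeFn_sub, Pi.sub_apply] using norm_sub_norm_le A B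

section SqMass

variable {α : Type*}

noncomputable def sqMass (f : α → ℝ) (S : Set α) : ℝ := ∑' g : S, f g ^ 2

lemma sqMass_nonneg (f : α → ℝ) (S : Set α) : 0 ≤ sqMass f S :=
  tsum_nonneg fun _ => sq_nonneg _

lemma sqMass_compl {f : α → ℝ} (hf : Summable fun g => f g ^ 2) (S : Set α) :
    sqMass f Sᶜ = ∑' g, f g ^ 2 - sqMass f S := by
  rw [← hf.tsum_subtype_add_tsum_subtype_compl S, sqMass, sqMass, add_sub_cancel_left]

lemma sum_sqMass_le {ι : Type*} {f : α → ℝ} (hf : Summable fun g => f g ^ 2) {s : Finset ι}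
    {t : ι → Set α} (hd : (s : Set ι).Pairwise (Disjoint on t)) :
    ∑ i ∈ s, sqMass f (t i) ≤ ∑' g, f g ^ 2 := by
  simp only [sqMass]
  rw [← Summable.tsum_finset_bUnion_disjoint hd fun i _ => hf.subtype _]
  exact hf.tsum_subtype_le _ _ fun _ => sq_nonneg _

end SqMass

section Displacement

variable {G : Type*} [Group G]

lemma disp_inv (x : G) (f : G → ℝ) : disp x⁻¹ f = disp x f := by
  rw [disp, disp, ← (Equiv.mulLeft x⁻¹).tsum_eq]
  simp only [inv_inv, Equiv.coe_mulLeft, mul_inv_cancel_left]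
  congr 1
  exact tsum_congr fun g => by ring

lemma summable_sq_sub_shift {f : G → ℝ} (hf : Summable fun g => f g ^ 2) (x : G) :
    Summable fun g => (f (x⁻¹ * g) - f g) ^ 2 := by
  have hshift : Summable fun g => f (x⁻¹ * g) ^ 2 := (Equiv.mulLeft x⁻¹).summable_iff.2 hf
  refine .of_nonneg_of_le (fun _ => sq_nonneg _) (fun g => ?_)
    ((hshift.mul_left 2).add (hf.mul_left 2))
  nlinarith [sq_nonneg (f (x⁻¹ * g) + f g)]

lemma sqMass_preimage_mul_left (f : G → ℝ) (x : G) (S : Set G) :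
    sqMass f ((x * ·) ⁻¹' S) = ∑' g : S, f (x⁻¹ * g) ^ 2 := by
  rw [sqMass, ← ((Equiv.mulLeft x).subtypeEquiv fun _ => Iff.rfl).tsum_eq
    fun g : S => f (x⁻¹ * g) ^ 2]
  exact tsum_congr fun c => by
    show f c ^ 2 = f (x⁻¹ * (x * c)) ^ 2
    rw [inv_mul_cancel_left]

lemma sqrt_sqMass_preimage_sub_le_disp {f : G → ℝ} (hf : Summable fun g => f g ^ 2) (x : G)
    (S : Set G) : √(sqMass f ((x * ·) ⁻¹' S)) - √(sqMass f S) ≤ disp x f := by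
  have hshift : Summable fun g => f (x⁻¹ * g) ^ 2 := (Equiv.mulLeft x⁻¹).summable_iff.2 hf
  calc √(sqMass f ((x * ·) ⁻¹' S)) - √(sqMass f S)
      ≤ √(∑' g : S, (f (x⁻¹ * g) - f g) ^ 2) := by
        rw [sqMass_preimage_mul_left]
        exact sqrt_tsum_sq_sub_le (hshift.subtype _) (hf.subtype _)
    _ ≤ disp x f := Real.sqrt_le_sqrt <|
        (summable_sq_sub_shift hf x).tsum_subtype_le _ S fun _ => sq_nonneg _

end Displacement

namespace FreeGroup

variable {α : Type*} [DecidableEq α]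

def startingWith (l : α × Bool) : Set (FreeGroup α) := {g | g.toWord.head? = some l}

lemma pairwise_disjoint_startingWith :
    Pairwise (Disjoint on (startingWith : α × Bool → Set (FreeGroup α))) :=
  fun _ _ hne => Set.disjoint_left.2 fun _ h h' => hne (Option.some_injective _ (h.symm.trans h'))

lemma mk_singleton_mul_mem_startingWith_iff (l : α × Bool) (h : FreeGroup α) :
    mk [l] * h ∈ startingWith l ↔ h ∉ startingWith (l.1, !l.2) := by
  obtain ⟨a, b⟩ := l
  have hred : IsReduced h.toWord := isReduced_toWord
  have hmul : (mk [(a, b)] * h).toWord = reduce ((a, b) :: h.toWord) := by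
    rw [toWord_mul, toWord_mk, reduce_singleton, List.singleton_append]
  simp only [startingWith, Set.mem_ofPred_eq, hmul]
  rw [reduce.cons, reduce_toWord]
  cases hw : h.toWord with
  | nil => simp
  | cons hd tl =>
    rw [hw] at hred
    by_cases hc : hd = (a, !b)
    · subst hc
      have htl : tl.head? ≠ some (a, b) := by
        intro htl
        obtain ⟨tl', rfl⟩ := List.head?_eq_some_iff.1 htl
        simp at hred
      simpa using htl
    · have hne : ¬ (a = hd.1 ∧ b = !hd.2) := by
        rintro ⟨rfl, rfl⟩
        simp at hc
      simpa [hne] using hc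

lemma preimage_mk_singleton_mul_startingWith (l : α × Bool) :
    (mk [l] * ·) ⁻¹' startingWith l = (startingWith (l.1, !l.2))ᶜ :=
  Set.ext (mk_singleton_mul_mem_startingWith_iff l)

lemma sqrt_one_sub_sqMass_sub_le_disp {f : FreeGroup α → ℝ} (hf : Summable fun g => f g ^ 2)
    (h1 : ∑' g, f g ^ 2 = 1) (l : α × Bool) :
    √(1 - sqMass f (startingWith (l.1, !l.2))) - √(sqMass f (startingWith l))
      ≤ disp (mk [l]) f := by
  rw [← h1, ← sqMass_compl hf, ← preimage_mk_singleton_mul_startingWith]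
  exact sqrt_sqMass_preimage_sub_le_disp hf _ _

lemma sqrt_half_sub_sqrt_quarter_le_disp_of {f : FreeGroup α → ℝ}
    (hf : Summable fun g => f g ^ 2) (h1 : ∑' g, f g ^ 2 = 1) (a : α)
    (h : sqMass f (startingWith (a, true)) + sqMass f (startingWith (a, false)) ≤ 1 / 2) :
    √(1 / 2) - √(1 / 4) ≤ disp (of a) f := by
  have h_of : √(1 - sqMass f (startingWith (a, false))) - √(sqMass f (startingWith (a, true)))
      ≤ disp (of a) f :=
    sqrt_one_sub_sqMass_sub_le_disp hf h1 (a, true)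
  have h_inv : √(1 - sqMass f (startingWith (a, true))) - √(sqMass f (startingWith (a, false)))
      ≤ disp (of a) f := by
    rw [← disp_inv, show (of a)⁻¹ = mk [(a, false)] from rfl]
    exact sqrt_one_sub_sqMass_sub_le_disp hf h1 (a, false)
  have hp₀ := sqMass_nonneg f (startingWith (a, true))
  have hq₀ := sqMass_nonneg f (startingWith (a, false))
  rcases le_total (sqMass f (startingWith (a, true))) (1 / 4) with hp | hp
  · refine le_trans ?_ h_of
    gcongr
    linarith
  · refine le_trans ?_ h_inv
    gcongr <;> linarith

end FreeGroup

open FreeGroup in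
/-- The left regular representation of the free group of rank 2 is uniformly
isolated from the trivial representation: there is ε > 0 such that every unit
vector of ℓ²(F₂) is moved by at least ε by one of the two free generators. -/
theorem free_group_alpha_pos :
    ∃ ε : ℝ, 0 < ε ∧ ∀ f : FreeGroup Bool → ℝ,
      Summable (fun g => (f g) ^ 2) → ∑' g, (f g) ^ 2 = 1 →
      ε ≤ max (disp (FreeGroup.of true) f) (disp (FreeGroup.of false) f) := by
  refine ⟨√(1 / 2) - √(1 / 4), sub_pos.2 (Real.sqrt_lt_sqrt (by norm_num) (by norm_num)),
    fun f hf h1 => ?_⟩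
  have htotal :=
    sum_sqMass_le hf (s := Finset.univ) (pairwise_disjoint_startingWith.set_pairwise _)
  rw [h1, Fintype.sum_prod_type, Fintype.sum_bool, Fintype.sum_bool, Fintype.sum_bool] at htotal
  by_cases hu :
      sqMass f (startingWith (true, true)) + sqMass f (startingWith (true, false)) ≤ 1 / 2
  · exact (sqrt_half_sub_sqrt_quarter_le_disp_of hf h1 true hu).trans (le_max_left _ _)
  · have hv : sqMass f (startingWith (false, true)) + sqMass f (startingWith (false, false))
        ≤ 1 / 2 := by linarith
    exact (sqrt_half_sub_sqrt_quarter_le_disp_of hf h1 false hv).trans (le_max_right _ _)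
end
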